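/- arXiv:math/0503142 — 4 statements merged into one kernel-verified Lean document; each statement's English description precedes it below -/
import Mathlib

section
/- Let A be a commutative ring, I an ideal of A, and f ∈ I a regular element (non-zerodivisor). Then the subring A[I/f] of the localization A_f, generated over A by the elements a/f for a ∈ I, is isomorphic as an A-algebra to the quotient of the Rees algebra A[It] = ⨁_{n≥0} Iⁿtⁿ by the ideal generated by (1 - ft). -/
/-!
Evaluating `t ↦ 1/f` maps `A[It]` onto `A[I/f]`, since `A[It]` is generated by the `a t`
with `a ∈ I`. For the kernel: modulo `1 - ft` every `p = ∑ pₖ tᵏ` of degree `≤ n` is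
congruent to `c tⁿ` with `c = ∑ pₖ fⁿ⁻ᵏ` (multiply `pₖ tᵏ` by `(ft)ⁿ⁻ᵏ ≡ 1`), and if `p`
evaluates to `0` then so does `c tⁿ`, i.e. `c / fⁿ = 0`, which forces `c = 0` because `f`
is a non-zerodivisor.
-/

open Polynomial

/-- `1 - f·t` is an element of the Rees algebra `A[It]` when `f ∈ I`. -/
lemma one_sub_ft_mem_reesAlgebra {A : Type*} [CommRing A] (I : Ideal A) {f : A} (hf : f ∈ I) :
    (1 : A[X]) - Polynomial.C f * Polynomial.X ∈ reesAlgebra I := by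
  refine sub_mem (one_mem _) ?_
  rw [Polynomial.C_mul_X_eq_monomial]
  exact reesAlgebra.monomial_mem.mpr (by simpa using hf)

open Finset

lemma one_sub_dvd_sub_mul_pow {R : Type*} [CommRing R] (x t : R) (n : ℕ) :
    1 - t ∣ x - x * t ^ n := by
  rw [← mul_one_sub]
  exact (one_sub_dvd_one_sub_pow t n).mul_left x

namespace reesAlgebra

variable {A : Type*} [CommRing A] {I : Ideal A} {f : A}

theorem exists_one_sub_dvd_sub_monomial (hf : f ∈ I) (p : reesAlgebra I) {n : ℕ}
    (hn : (p : A[X]).natDegree ≤ n) :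
    ∃ (q : reesAlgebra I) (c : A), (q : A[X]) = monomial n c ∧
      (⟨1 - C f * X, one_sub_ft_mem_reesAlgebra I hf⟩ : reesAlgebra I) ∣ p - q := by
  let m (k : ℕ) : reesAlgebra I :=
    ⟨monomial k ((p : A[X]).coeff k), monomial_mem.mpr ((mem_reesAlgebra_iff I _).mp p.2 k)⟩
  let τ : reesAlgebra I := ⟨monomial 1 f, monomial_mem.mpr (by rwa [pow_one])⟩
  have hp : p = ∑ k ∈ range (n + 1), m k :=
    Subtype.ext (by simpa [m] using as_sum_range' _ _ (Nat.lt_succ_of_le hn))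
  have hτ : (⟨1 - C f * X, one_sub_ft_mem_reesAlgebra I hf⟩ : reesAlgebra I) = 1 - τ :=
    Subtype.ext (by simp [τ, C_mul_X_eq_monomial])
  refine ⟨∑ k ∈ range (n + 1), m k * τ ^ (n - k),
    ∑ k ∈ range (n + 1), (p : A[X]).coeff k * f ^ (n - k), ?_, ?_⟩
  · simp only [AddSubmonoidClass.coe_finsetSum, MulMemClass.coe_mul, SubmonoidClass.coe_pow, m, τ,
      monomial_pow, monomial_mul_monomial, map_sum]
    refine sum_congr rfl fun k hk => ?_
    rw [one_mul, Nat.add_sub_cancel' (Nat.lt_succ_iff.mp (mem_range.mp hk))]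
  · rw [hp, hτ, ← sum_sub_distrib]
    exact dvd_sum fun k _ => one_sub_dvd_sub_mul_pow _ _ _

variable (I f)

noncomputable def toLocalizationAway : reesAlgebra I →ₐ[A] Localization.Away f :=
  (aeval (IsLocalization.Away.invSelf f)).comp (reesAlgebra I).val

theorem range_toLocalizationAway :
    (toLocalizationAway I f).range = Algebra.adjoin A {x : Localization.Away f |
      ∃ a ∈ I, algebraMap A (Localization.Away f) f * x
        = algebraMap A (Localization.Away f) a} := by
  rw [toLocalizationAway, AlgHom.range_comp, Subalgebra.range_val,
    ← adjoin_monomial_eq_reesAlgebra, AlgHom.map_adjoin]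
  congr 1
  ext x
  constructor
  · rintro ⟨_, ⟨a, ha, rfl⟩, rfl⟩
    refine ⟨a, ha, ?_⟩
    rw [aeval_monomial, pow_one, mul_left_comm, IsLocalization.Away.mul_invSelf, mul_one]
  · rintro ⟨a, ha, hx⟩
    refine ⟨monomial 1 a, ⟨a, ha, rfl⟩, ?_⟩
    rw [aeval_monomial, pow_one, ← hx, mul_comm (algebraMap _ _ f), mul_assoc,
      IsLocalization.Away.mul_invSelf, mul_one]

variable {I f}

theorem eq_zero_of_coe_eq_monomial_of_toLocalizationAway_eq_zero (hreg : f ∈ nonZeroDivisors A)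
    {q : reesAlgebra I} {n : ℕ} {c : A} (hq : (q : A[X]) = monomial n c)
    (h : toLocalizationAway I f q = 0) : q = 0 := by
  have hu : IsUnit (IsLocalization.Away.invSelf (S := Localization.Away f) f) :=
    .of_mul_eq_one_right _ (IsLocalization.Away.mul_invSelf f)
  have hc : algebraMap A (Localization.Away f) c = 0 := by
    refine (hu.pow n).mul_left_eq_zero.mp ?_
    rw [← aeval_monomial, ← hq]
    exact h
  have hc0 : c = 0 :=
    IsLocalization.injective _ (Submonoid.powers_le.mpr hreg) (hc.trans (map_zero _).symm)
  exact Subtype.ext (by rw [hq, hc0, map_zero]; rfl)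

theorem ker_toLocalizationAway (hf : f ∈ I) (hreg : f ∈ nonZeroDivisors A) :
    RingHom.ker (toLocalizationAway I f) =
      Ideal.span {⟨1 - C f * X, one_sub_ft_mem_reesAlgebra I hf⟩} := by
  set φ := toLocalizationAway I f
  have hφ : φ ⟨1 - C f * X, one_sub_ft_mem_reesAlgebra I hf⟩ = 0 := by
    simp [φ, toLocalizationAway, IsLocalization.Away.mul_invSelf]
  refine le_antisymm (fun p hp => ?_) ((Ideal.span_singleton_le_iff_mem _).mpr hφ)
  obtain ⟨q, c, hq, r, hr⟩ := exists_one_sub_dvd_sub_monomial hf p le_rfl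
  have hφq : φ q = 0 := by
    have := congrArg φ hr
    rwa [map_sub, map_mul, hφ, zero_mul, RingHom.mem_ker.mp hp, zero_sub, neg_eq_zero] at this
  have hq0 : q = 0 := eq_zero_of_coe_eq_monomial_of_toLocalizationAway_eq_zero hreg hq hφq
  rw [Ideal.mem_span_singleton]
  exact ⟨r, by rw [← hr, hq0, sub_zero]⟩

end reesAlgebra

/-- For a commutative ring `A`, an ideal `I` and a non-zerodivisor `f ∈ I`,
the subalgebra `A[I/f]` of the localization `A_f` generated over `A` by the elements
`a/f`, `a ∈ I`, is isomorphic as an `A`-algebra to the quotient of the Rees algebra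
`A[It] = ⨁ Iⁿtⁿ` by the ideal generated by `1 - f·t`. -/
theorem affine_modification_eq_rees_quotient {A : Type*} [CommRing A] (I : Ideal A) (f : A)
    (hfI : f ∈ I) (hreg : f ∈ nonZeroDivisors A) :
    Nonempty
      (((reesAlgebra I) ⧸ (Ideal.span {(⟨1 - Polynomial.C f * Polynomial.X,
          one_sub_ft_mem_reesAlgebra I hfI⟩ : reesAlgebra I)})) ≃ₐ[A]
        (Algebra.adjoin A {x : Localization.Away f |
          ∃ a ∈ I, algebraMap A (Localization.Away f) f * x
            = algebraMap A (Localization.Away f) a})) :=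
  ⟨(Ideal.quotientEquivAlgOfEq A (reesAlgebra.ker_toLocalizationAway hfI hreg).symm).trans <|
    (Ideal.quotientKerEquivRange (reesAlgebra.toLocalizationAway I f)).trans <|
      Subalgebra.equivOfEq _ _ (reesAlgebra.range_toLocalizationAway I f)⟩
end

section
/- Let A be a commutative ring with total ring of fractions K_A, let J ⊆ K_A be a finitely generated A-submodule, let F = { f ∈ A : f·J ⊆ A }, and suppose f ∈ F is a non-zerodivisor of A. Set J̃ = f·J ⊆ A and I = (f) + J̃ (the ideal generated by f and J̃). Then the A-subalgebra A[J] of K_A generated by J is equal, inside K_A, to the subalgebra A[I/f] = { a/fᵏ : a ∈ Iᵏ, k ≥ 0 } of A_f. -/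
open Pointwise

/-!
For an ideal `I ∋ f`, the `x ∈ K` with `f ^ k * x` in the image of `I ^ k` for some `k` form a
subalgebra, which is `A[I/f]` when `f` is regular in `K`. With `I = (f) + f • J`, the generators
`j ∈ J` lie in `A[I/f]` (as `f j ∈ I`), and conversely every `i ∈ I` is `f` times an element
`r + j` of `A[J]`; hence every `a ∈ I ^ k` is `f ^ k` times an element of `A[J]`, and `f ^ k`
can be cancelled.
-/

section AffineModification

variable {A : Type*} (K : Type*) [CommRing A] [CommRing K] [Algebra A K]

def affineModification (I : Ideal A) (f : A) (hf : f ∈ I) : Subalgebra A K where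
  carrier := {x | ∃ k : ℕ, ∃ a ∈ I ^ k, algebraMap A K f ^ k * x = algebraMap A K a}
  mul_mem' := by
    rintro x y ⟨k, a, ha, hax⟩ ⟨l, b, hb, hby⟩
    refine ⟨k + l, a * b, pow_add I k l ▸ Ideal.mul_mem_mul ha hb, ?_⟩
    rw [map_mul, ← hax, ← hby]
    ring
  add_mem' := by
    rintro x y ⟨k, a, ha, hax⟩ ⟨l, b, hb, hby⟩
    refine ⟨k + l, a * f ^ l + b * f ^ k, Ideal.add_mem _ ?_ ?_, ?_⟩
    · exact pow_add I k l ▸ Ideal.mul_mem_mul ha (Ideal.pow_mem_pow hf l)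
    · exact add_comm l k ▸ pow_add I l k ▸ Ideal.mul_mem_mul hb (Ideal.pow_mem_pow hf k)
    · rw [map_add, map_mul, map_mul, map_pow, map_pow, ← hax, ← hby]
      ring
  algebraMap_mem' r := ⟨0, r, by simp [Ideal.one_eq_top], by simp⟩

variable {K} {I : Ideal A} {f : A} {hf : f ∈ I}

theorem exists_eq_pow_mul_of_mem_pow {B : Subalgebra A K}
    (hI : ∀ i ∈ I, ∃ s ∈ B, algebraMap A K i = algebraMap A K f * s) {k : ℕ} {a : A}
    (ha : a ∈ I ^ k) : ∃ t ∈ B, algebraMap A K a = algebraMap A K f ^ k * t := by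
  induction k generalizing a with
  | zero => exact ⟨algebraMap A K a, B.algebraMap_mem a, by simp⟩
  | succ k ih =>
    rw [pow_succ] at ha
    refine Submodule.mul_induction_on ha (fun b hb i hi ↦ ?_) ?_
    · obtain ⟨t, ht, hbt⟩ := ih hb
      obtain ⟨s, hs, his⟩ := hI i hi
      exact ⟨t * s, B.mul_mem ht hs, by rw [map_mul, hbt, his, pow_succ]; ring⟩
    · rintro u v ⟨t, ht, hut⟩ ⟨s, hs, hvs⟩
      exact ⟨t + s, B.add_mem ht hs, by rw [map_add, hut, hvs, mul_add]⟩

theorem affineModification_le {B : Subalgebra A K} (hreg : IsLeftRegular (algebraMap A K f))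
    (hI : ∀ i ∈ I, ∃ s ∈ B, algebraMap A K i = algebraMap A K f * s) :
    affineModification K I f hf ≤ B := by
  rintro x ⟨k, a, ha, hax⟩
  obtain ⟨t, ht, hat⟩ := exists_eq_pow_mul_of_mem_pow hI ha
  rwa [(hreg.pow k) (hax.trans hat)]

theorem subset_affineModification {S : Set K}
    (hS : ∀ y ∈ S, ∃ a ∈ I, algebraMap A K f * y = algebraMap A K a) :
    S ⊆ affineModification K I f hf := fun y hy ↦ by
  obtain ⟨a, ha, hya⟩ := hS y hy
  exact ⟨1, a, by rwa [pow_one], by rwa [pow_one]⟩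

end AffineModification

section AdjoinSubmodule

variable {A K : Type*} [CommRing A] [CommRing K] [Algebra A K] {J : Submodule A K} {f : A}

theorem mem_span_sup_comap_smul_of_mem (hden : ∀ x ∈ J, f • x ∈ (1 : Submodule A K))
    {y : K} (hy : y ∈ J) :
    ∃ a ∈ Ideal.span {f} ⊔ (f • J).comap (Algebra.linearMap A K),
      algebraMap A K f * y = algebraMap A K a := by
  obtain ⟨a, ha⟩ := Submodule.mem_one.mp (hden y hy)
  refine ⟨a, Ideal.mem_sup_right ?_, by rw [ha, Algebra.smul_def]⟩
  rw [Submodule.mem_comap, Algebra.linearMap_apply, ha]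
  exact Submodule.smul_mem_pointwise_smul y f J hy

theorem exists_mem_adjoin_of_mem_span_sup_comap_smul {i : A}
    (hi : i ∈ Ideal.span {f} ⊔ (f • J).comap (Algebra.linearMap A K)) :
    ∃ s ∈ Algebra.adjoin A (J : Set K), algebraMap A K i = algebraMap A K f * s := by
  obtain ⟨p, hp, q, hq, rfl⟩ := Submodule.mem_sup.mp hi
  obtain ⟨r, rfl⟩ := Ideal.mem_span_singleton.mp hp
  obtain ⟨j, hj, hjq⟩ := Set.mem_smul_set.mp (Submodule.mem_comap.mp hq)
  refine ⟨algebraMap A K r + j, Subalgebra.add_mem _ (Subalgebra.algebraMap_mem _ r)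
    (Algebra.subset_adjoin hj), ?_⟩
  rw [Algebra.linearMap_apply] at hjq
  rw [map_add, map_mul, ← hjq, Algebra.smul_def]
  ring

theorem adjoin_eq_affineModification (hreg : IsLeftRegular (algebraMap A K f))
    (hden : ∀ x ∈ J, f • x ∈ (1 : Submodule A K)) :
    Algebra.adjoin A (J : Set K) =
      affineModification K (Ideal.span {f} ⊔ (f • J).comap (Algebra.linearMap A K)) f
        (Ideal.mem_sup_left (Ideal.mem_span_singleton_self f)) :=
  le_antisymm
    (Algebra.adjoin_le (subset_affineModification fun _ ↦ mem_span_sup_comap_smul_of_mem hden))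
    (affineModification_le hreg fun _ ↦ exists_mem_adjoin_of_mem_span_sup_comap_smul)

end AdjoinSubmodule

theorem adjoin_fractional_ideal_eq_affine_modification_general {A : Type*} [CommRing A]
    (J : Submodule A (FractionRing A)) (f : A)
    (hreg : f ∈ nonZeroDivisors A)
    (hden : ∀ x ∈ J, f • x ∈ (1 : Submodule A (FractionRing A))) :
    (Algebra.adjoin A (J : Set (FractionRing A)) : Set (FractionRing A)) =
      {x : FractionRing A | ∃ (k : ℕ), ∃ a ∈
          ((Ideal.span {f} ⊔
            Submodule.comap (Algebra.linearMap A (FractionRing A)) (f • J) : Ideal A)) ^ k,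
        (algebraMap A (FractionRing A) f) ^ k * x = algebraMap A (FractionRing A) a} := by
  have hunit : IsUnit (algebraMap A (FractionRing A) f) :=
    IsLocalization.map_units (FractionRing A) (⟨f, hreg⟩ : nonZeroDivisors A)
  rw [adjoin_eq_affineModification hunit.isRegular.left hden]
  rfl

/-- Let `A` be a commutative ring with total fraction ring `K_A`, let
`J ⊆ K_A` be a finitely generated `A`-submodule, `F = {f ∈ A | f·J ⊆ A}` its ideal of
denominators, and `f ∈ F` a non-zerodivisor. Put `J̃ = f·J ⊆ A` and `I = (f) + J̃`.
Then the `A`-subalgebra `A[J] ⊆ K_A` generated by `J` coincides, inside `K_A`, with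
`A[I/f] = {a/fᵏ | a ∈ Iᵏ, k ≥ 0}`. -/
theorem adjoin_fractional_ideal_eq_affine_modification {A : Type*} [CommRing A]
    (J : Submodule A (FractionRing A)) (hJ : J.FG) (f : A)
    (hreg : f ∈ nonZeroDivisors A)
    (hden : ∀ x ∈ J, f • x ∈ (1 : Submodule A (FractionRing A))) :
    (Algebra.adjoin A (J : Set (FractionRing A)) : Set (FractionRing A)) =
      {x : FractionRing A | ∃ (k : ℕ), ∃ a ∈
          ((Ideal.span {f} ⊔
            Submodule.comap (Algebra.linearMap A (FractionRing A)) (f • J) : Ideal A)) ^ k,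
        (algebraMap A (FractionRing A) f) ^ k * x = algebraMap A (FractionRing A) a} :=
  adjoin_fractional_ideal_eq_affine_modification_general J f hreg hden
end

section
/- Let A be a commutative ring and a₀, a₁, …, a_r ∈ A a regular sequence generating an ideal I. Then the Rees algebra A[It] is isomorphic, via Xᵢ ↦ aᵢt, to the quotient of the polynomial ring A[X₀, …, X_r] by the ideal generated by the 2×2 minors aᵢXⱼ − aⱼXᵢ (0 ≤ i < j ≤ r) of the matrix with rows (a₀, …, a_r) and (X₀, …, X_r). -/
/-!
Evaluating `Xᵢ ↦ aᵢt` maps `A[X]` onto the Rees algebra, and a polynomial lies in the kernel iff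
each of its homogeneous components vanishes at `a`. With `Iₘ = (a₀, …, aₘ₋₁)`, induction on `m`
and then on the degree shows that a form in `X₀, …, Xₘ₋₁` vanishing at `a` lies in the ideal of
minors. The hypothesis for `m` implies that a form of degree `d` whose value lies in `Iₘᵈ⁺¹` has
its coefficients in `Iₘ`; as `aₘ` is regular modulo `Iₘ`, this gives `(Iₘᵈ : aₘ) = Iₘᵈ`.
For the step write `F = G + Xₘ H` with `G` free of `Xₘ`. Then `aₘ H(a) = -G(a) ∈ Iₘᵉ⁺¹`, so
`H(a) = ∑ aᵢ Pᵢ(a)` with `i < m` and `deg Pᵢ = e`; put `H' = ∑ aᵢ Pᵢ` and `W = ∑ Xᵢ Pᵢ`, so that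
`Xₘ H' - aₘ W` is a combination of minors. Finally
`F = (G + aₘ W) + Xₘ (H - H') + (Xₘ H' - aₘ W)`, where the first summand vanishes at `a` and
involves fewer variables, and the second has lower degree.
-/

noncomputable section

namespace ReesAlgebraPresentation

open MvPolynomial

variable {σ A : Type*} [CommRing A]

def minorsIdeal (a : σ → A) (s : Set σ) : Ideal (MvPolynomial σ A) :=
  Ideal.span {p | ∃ i ∈ s, ∃ j ∈ s, p = C (a i) * X j - C (a j) * X i}

variable (A) in
def homogeneousSupported (s : Set σ) (d : ℕ) : Submodule A (MvPolynomial σ A) :=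
  homogeneousSubmodule σ A d ⊓ Subalgebra.toSubmodule (supported A s)

section

variable {a : σ → A} {s t : Set σ} {d e : ℕ}

theorem minorsIdeal_mono (h : s ⊆ t) : minorsIdeal a s ≤ minorsIdeal a t :=
  Ideal.span_mono fun _ ⟨i, hi, j, hj, hp⟩ => ⟨i, h hi, j, h hj, hp⟩

theorem C_mul_X_sub_mem_minorsIdeal {i j : σ} (hi : i ∈ s) (hj : j ∈ s) :
    C (a i) * X j - C (a j) * X i ∈ minorsIdeal a s :=
  Ideal.subset_span ⟨i, hi, j, hj, rfl⟩

theorem minorsIdeal_le_map_C : minorsIdeal a s ≤ Ideal.map C (Ideal.span (a '' s)) := by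
  refine Ideal.span_le.2 ?_
  rintro _ ⟨i, hi, j, hj, rfl⟩
  have hmem (k : σ) (hk : k ∈ s) :
      (C (a k) : MvPolynomial σ A) ∈ Ideal.map C (Ideal.span (a '' s)) :=
    Ideal.mem_map_of_mem _ (Ideal.subset_span ⟨k, hk, rfl⟩)
  exact sub_mem (Ideal.mul_mem_right _ _ (hmem i hi)) (Ideal.mul_mem_right _ _ (hmem j hj))

theorem mem_homogeneousSupported_iff {P : MvPolynomial σ A} :
    P ∈ homogeneousSupported A s d ↔
      ∀ α, coeff α P ≠ 0 → α.degree = d ∧ ↑α.support ⊆ s := by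
  simp only [homogeneousSupported, Submodule.mem_inf, mem_homogeneousSubmodule,
    Subalgebra.mem_toSubmodule, mem_supported, Set.subset_def, Finset.mem_coe,
    mem_vars_iff_mem_support, mem_support_iff]
  constructor
  · rintro ⟨hd, hs⟩ α hα
    exact ⟨not_imp_comm.1 hd.coeff_eq_zero hα, fun i hi => hs i ⟨α, hα, hi⟩⟩
  · intro h
    refine ⟨fun α hα => ?_, fun i ⟨α, hα, hi⟩ => (h α hα).2 i hi⟩
    rw [← (h α hα).1, Finsupp.degree_eq_weight_one]
    rfl

theorem X_mem_homogeneousSupported {i : σ} (hi : i ∈ s) : X i ∈ homogeneousSupported A s 1 :=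
  ⟨isHomogeneous_X A i, Algebra.subset_adjoin ⟨i, hi, rfl⟩⟩

theorem C_mem_homogeneousSupported (c : A) : C c ∈ homogeneousSupported A s 0 :=
  ⟨isHomogeneous_C σ c, Subalgebra.algebraMap_mem _ c⟩

theorem mul_mem_homogeneousSupported {P Q : MvPolynomial σ A} (hP : P ∈ homogeneousSupported A s d)
    (hQ : Q ∈ homogeneousSupported A s e) : P * Q ∈ homogeneousSupported A s (d + e) :=
  ⟨hP.1.mul hQ.1, Subalgebra.mul_mem _ hP.2 hQ.2⟩

theorem homogeneousSupported_mono (h : s ⊆ t) :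
    homogeneousSupported A s d ≤ homogeneousSupported A t d :=
  inf_le_inf_left _ (supported_mono h)

theorem aeval_mem_mul_pow {T : Ideal A} {P : MvPolynomial σ A}
    (hP : P ∈ homogeneousSupported A s d) (hT : P ∈ Ideal.map C T) :
    aeval a P ∈ T * Ideal.span (a '' s) ^ d := by
  rw [P.as_sum, map_sum]
  refine Ideal.sum_mem _ fun α hα => ?_
  obtain ⟨hdeg, hsupp⟩ := mem_homogeneousSupported_iff.1 hP α (mem_support_iff.1 hα)
  rw [aeval_monomial, Algebra.algebraMap_self_apply, Finsupp.prod, ← hdeg,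
    Finsupp.degree_apply, ← Finset.prod_pow_eq_pow_sum]
  exact Ideal.mul_mem_mul (mem_map_C_iff.1 hT α) (Ideal.prod_mem_prod fun i hi =>
    Ideal.pow_mem_pow (Ideal.subset_span (Set.mem_image_of_mem a (hsupp hi))) _)

theorem exists_aeval_eq_of_mem_mul_pow {T : Ideal A} {x : A}
    (hx : x ∈ T * Ideal.span (a '' s) ^ d) :
    ∃ P ∈ homogeneousSupported A s d, P ∈ Ideal.map C T ∧ aeval a P = x := by
  induction d generalizing T x with
  | zero =>
    rw [pow_zero, Submodule.mul_one] at hx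
    exact ⟨C x, C_mem_homogeneousSupported x, Ideal.mem_map_of_mem _ hx, aeval_C _ _⟩
  | succ d ih =>
    rw [pow_succ, ← mul_assoc] at hx
    refine Submodule.mul_induction_on hx (fun p hp q hq => ?_) fun x y hx hy => ?_
    · obtain ⟨P, hP, hPT, rfl⟩ := ih hp
      have hspan : Ideal.span (a '' s) = (Submodule.span A (X '' s)).map (aeval a).toLinearMap := by
        rw [Submodule.map_span, ← Set.image_comp]
        simp [Function.comp_def]
      rw [hspan] at hq
      obtain ⟨L, hL, rfl⟩ := hq
      have hL1 : L ∈ homogeneousSupported A s 1 :=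
        Submodule.span_le.2 (by rintro _ ⟨i, hi, rfl⟩; exact X_mem_homogeneousSupported hi) hL
      exact ⟨P * L, mul_mem_homogeneousSupported hP hL1, Ideal.mul_mem_right _ _ hPT, map_mul _ _ _⟩
    · obtain ⟨P, hP, hPT, rfl⟩ := hx
      obtain ⟨Q, hQ, hQT, rfl⟩ := hy
      exact ⟨P + Q, add_mem hP hQ, add_mem hPT hQT, map_add _ _ _⟩

theorem exists_eq_add_X_mul {y : σ} {F : MvPolynomial σ A}
    (hF : F ∈ homogeneousSupported A (insert y s) (d + 1)) :
    ∃ G ∈ homogeneousSupported A s (d + 1), ∃ H ∈ homogeneousSupported A (insert y s) d,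
      F = G + X y * H := by
  rw [mem_homogeneousSupported_iff] at hF
  refine ⟨F.modMonomial (Finsupp.single y 1), ?_, F.divMonomial (Finsupp.single y 1), ?_,
    (modMonomial_add_divMonomial_single F y).symm⟩
  · refine mem_homogeneousSupported_iff.2 fun α hα => ?_
    have hy : ¬ Finsupp.single y 1 ≤ α := fun h => hα (coeff_modMonomial_of_le _ h)
    rw [coeff_modMonomial_of_not_le _ hy] at hα
    obtain ⟨hdeg, hsupp⟩ := hF α hα
    refine ⟨hdeg, fun i hi => (Set.mem_insert_iff.1 (hsupp hi)).resolve_left ?_⟩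
    rintro rfl
    exact hy (Finsupp.single_le_iff.2 (Nat.one_le_iff_ne_zero.2 (Finsupp.mem_support_iff.1 hi)))
  · refine mem_homogeneousSupported_iff.2 fun α hα => ?_
    rw [coeff_divMonomial] at hα
    obtain ⟨hdeg, hsupp⟩ := hF _ hα
    rw [map_add, Finsupp.degree_single] at hdeg
    exact ⟨by omega, (Finset.coe_subset.2 (Finsupp.support_mono le_add_self)).trans hsupp⟩

theorem exists_X_mul_sub_C_mul_mem_minorsIdeal (y : σ) {x : A}
    (hx : x ∈ Ideal.span (a '' s) ^ (d + 1)) :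
    ∃ H ∈ homogeneousSupported A s d, ∃ W ∈ homogeneousSupported A s (d + 1),
      aeval a H = x ∧ aeval a W = x ∧ X y * H - C (a y) * W ∈ minorsIdeal a (insert y s) := by
  rw [pow_succ, ← smul_eq_mul, Submodule.mem_ideal_smul_span_iff_exists_sum'] at hx
  obtain ⟨c, hc, rfl⟩ := hx
  choose P hP _ hPa using fun i : s =>
    exists_aeval_eq_of_mem_mul_pow (T := ⊤) (a := a) (by rw [Ideal.top_mul]; exact hc i)
  refine ⟨c.sum fun i _ => C (a i) * P i, ?_, c.sum fun i _ => P i * X (i : σ), ?_, ?_, ?_, ?_⟩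
  · exact Submodule.finsuppSum_mem _ _ _ _ fun i _ => by
      rw [C_mul']; exact Submodule.smul_mem _ (a i) (hP i)
  · exact Submodule.finsuppSum_mem _ _ _ _ fun i _ =>
      mul_mem_homogeneousSupported (hP i) (X_mem_homogeneousSupported i.2)
  · rw [map_finsuppSum]
    exact Finset.sum_congr rfl fun i _ => by
      simp only [map_mul, aeval_C, hPa, Algebra.algebraMap_self_apply, smul_eq_mul, mul_comm]
  · rw [map_finsuppSum]
    exact Finset.sum_congr rfl fun i _ => by
      simp only [map_mul, aeval_X, hPa, smul_eq_mul]
  · rw [Finsupp.sum, Finsupp.sum, Finset.mul_sum, Finset.mul_sum, ← Finset.sum_sub_distrib]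
    refine Ideal.sum_mem _ fun i _ => ?_
    rw [show X y * (C (a i) * P i) - C (a y) * (P i * X (i : σ)) =
      (C (a i) * X y - C (a y) * X (i : σ)) * P i by ring]
    exact Ideal.mul_mem_right _ _
      (C_mul_X_sub_mem_minorsIdeal (Set.mem_insert_of_mem _ i.2) (Set.mem_insert y s))

end

theorem eq_zero_of_isHomogeneous_zero {R : Type*} [CommSemiring R] {a : σ → R}
    {F : MvPolynomial σ R} (hF : F.IsHomogeneous 0) (h : aeval a F = 0) : F = 0 := by
  have hC : F = C (coeff 0 F) := by
    rw [← homogeneousComponent_zero, homogeneousComponent_eq_self hF]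
  rw [hC, aeval_C, Algebra.algebraMap_self_apply] at h
  rw [hC, h, map_zero]

def MinorsContainKernel (a : σ → A) (s : Set σ) : Prop :=
  ∀ d, ∀ F ∈ homogeneousSupported A s d, aeval a F = 0 → F ∈ minorsIdeal a s

theorem minorsContainKernel_empty (a : σ → A) : MinorsContainKernel a ∅ := by
  intro d F hF hFa
  obtain ⟨c, rfl⟩ := Algebra.mem_bot.1 (supported_empty (R := A) ▸ hF.2)
  rw [AlgHom.commutes, Algebra.algebraMap_self_apply] at hFa
  rw [hFa, map_zero]
  exact zero_mem _

namespace MinorsContainKernel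

variable {a : σ → A} {s : Set σ} {d : ℕ} (h : MinorsContainKernel a s)
include h

theorem mem_map_C_of_aeval_mem_pow_succ {F : MvPolynomial σ A}
    (hF : F ∈ homogeneousSupported A s d) (hFa : aeval a F ∈ Ideal.span (a '' s) ^ (d + 1)) :
    F ∈ Ideal.map C (Ideal.span (a '' s)) := by
  rw [pow_succ'] at hFa
  obtain ⟨H, hH, hHI, hHa⟩ := exists_aeval_eq_of_mem_mul_pow hFa
  have hFH : F - H ∈ minorsIdeal a s := h d _ (sub_mem hF hH) (by rw [map_sub, hHa, sub_self])
  simpa using add_mem (minorsIdeal_le_map_C hFH) hHI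

theorem mem_pow_of_mul_mem_pow {y : σ}
    (hy : ∀ x, a y * x ∈ Ideal.span (a '' s) → x ∈ Ideal.span (a '' s)) {x : A}
    (hx : a y * x ∈ Ideal.span (a '' s) ^ d) : x ∈ Ideal.span (a '' s) ^ d := by
  induction d with
  | zero => simp
  | succ d ih =>
    obtain ⟨P, hP, -, rfl⟩ := exists_aeval_eq_of_mem_mul_pow (T := ⊤) (a := a) (s := s)
      (by rw [Ideal.top_mul]; exact ih (Ideal.pow_le_pow_right d.le_succ hx))
    have hCP : C (a y) * P ∈ Ideal.map C (Ideal.span (a '' s)) :=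
      h.mem_map_C_of_aeval_mem_pow_succ (by rw [C_mul']; exact Submodule.smul_mem _ _ hP)
        (by simpa using hx)
    have hPI : P ∈ Ideal.map C (Ideal.span (a '' s)) :=
      mem_map_C_iff.2 fun α => hy _ (by simpa using mem_map_C_iff.1 hCP α)
    rw [pow_succ']
    exact aeval_mem_mul_pow hP hPI

end MinorsContainKernel

theorem minorsContainKernel_insert {a : σ → A} {s : Set σ} (h : MinorsContainKernel a s)
    {y : σ} (hy : ∀ x, a y * x ∈ Ideal.span (a '' s) → x ∈ Ideal.span (a '' s)) :
    MinorsContainKernel a (insert y s) := by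
  intro d
  induction d with
  | zero =>
    intro F hF hFa
    rw [eq_zero_of_isHomogeneous_zero hF.1 hFa]
    exact zero_mem _
  | succ e ih =>
    intro F hF hFa
    obtain ⟨G, hG, H, hH, rfl⟩ := exists_eq_add_X_mul hF
    have hGH : aeval a G + a y * aeval a H = 0 := by simpa using hFa
    have hGpow : aeval a G ∈ Ideal.span (a '' s) ^ (e + 1) := by
      simpa using aeval_mem_mul_pow (T := ⊤) hG (by rw [Ideal.map_top]; trivial)
    have hHpow : aeval a H ∈ Ideal.span (a '' s) ^ (e + 1) :=
      h.mem_pow_of_mul_mem_pow hy (by rw [eq_neg_of_add_eq_zero_right hGH]; exact neg_mem hGpow)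
    obtain ⟨H', hH', W, hW, hH'a, hWa, hK⟩ := exists_X_mul_sub_C_mul_mem_minorsIdeal y hHpow
    have hHH' : H - H' ∈ minorsIdeal a (insert y s) :=
      ih _ (sub_mem hH (homogeneousSupported_mono (Set.subset_insert y s) hH'))
        (by rw [map_sub, hH'a, sub_self])
    have hGW : G + C (a y) * W ∈ minorsIdeal a s :=
      h _ _ (add_mem hG (by rw [C_mul']; exact Submodule.smul_mem _ _ hW))
        (by rw [map_add, map_mul, aeval_C, hWa, ← hGH]; rfl)
    rw [show G + X y * H = (G + C (a y) * W) + X y * (H - H') + (X y * H' - C (a y) * W) by ring]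
    exact add_mem (add_mem (minorsIdeal_mono (Set.subset_insert y s) hGW)
      (Ideal.mul_mem_left _ _ hHH')) hK

theorem ofList_take_ofFn {R : Type*} [Semiring R] {n m : ℕ} (h : m ≤ n) (a : Fin n → R) :
    Ideal.ofList ((List.ofFn a).take m) = Ideal.span (a '' {i | (i : ℕ) < m}) := by
  rw [← Fin.ofFn_take_eq_take_ofFn h, ← Fin.range_castLE h, ← Set.range_comp]
  exact congrArg Ideal.span (Set.ext fun x => List.mem_ofFn' _ x)

theorem mem_of_mul_mem_of_isWeaklyRegular {n m : ℕ} {a : Fin n → A}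
    (ha : RingTheory.Sequence.IsWeaklyRegular A (List.ofFn a)) (hm : m < n) {x : A}
    (hx : a ⟨m, hm⟩ * x ∈ Ideal.span (a '' {i | (i : ℕ) < m})) :
    x ∈ Ideal.span (a '' {i | (i : ℕ) < m}) := by
  have hreg := ha.regular_mod_prev m (by simpa using hm)
  rw [ofList_take_ofFn hm.le, smul_eq_mul, Ideal.mul_top, List.getElem_ofFn] at hreg
  exact mem_of_isSMulRegular_quotient_of_smul_mem hreg hx

theorem coeff_aeval_monomial_one {R : Type*} [CommSemiring R] (a : σ → R)
    (F : MvPolynomial σ R) (k : ℕ) :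
    (aeval (fun i => Polynomial.monomial 1 (a i)) F).coeff k =
      aeval a (homogeneousComponent k F) := by
  induction F using MvPolynomial.induction_on' with
  | monomial α c =>
    rw [homogeneousComponent_of_mem (isHomogeneous_monomial c rfl)]
    simp only [aeval_monomial, Finsupp.prod, ← Polynomial.C_mul_X_eq_monomial, mul_pow,
      Finset.prod_mul_distrib, Finset.prod_pow_eq_pow_sum, ← Finsupp.degree_apply, ← map_pow,
      ← map_prod, Polynomial.algebraMap_eq, ← mul_assoc, ← map_mul, Polynomial.coeff_C_mul_X_pow]
    split_ifs <;> simp [aeval_monomial, Finsupp.prod]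
  | add p q hp hq => rw [map_add, Polynomial.coeff_add, hp, hq, map_add, map_add]

theorem range_aeval_monomial_one (a : σ → A) :
    (aeval fun i => Polynomial.monomial 1 (a i)).range =
      reesAlgebra (Ideal.span (Set.range a)) := by
  rw [aeval_range, ← adjoin_monomial_eq_reesAlgebra, Submodule.map_span, Algebra.adjoin_span,
    ← Set.range_comp]
  rfl

theorem MinorsContainKernel.ker_aeval_monomial_one {a : σ → A}
    (h : MinorsContainKernel a Set.univ) :
    RingHom.ker (aeval fun i => Polynomial.monomial 1 (a i)) = minorsIdeal a Set.univ := by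
  refine le_antisymm (fun F hF => ?_) (Ideal.span_le.2 ?_)
  · rw [← sum_homogeneousComponent F]
    refine Ideal.sum_mem _ fun k _ =>
      h k _ ⟨homogeneousComponent_mem k F, by simp [supported_univ]⟩ ?_
    rw [← coeff_aeval_monomial_one, RingHom.mem_ker.1 hF, Polynomial.coeff_zero]
  · rintro _ ⟨i, -, j, -, rfl⟩
    simp [RingHom.mem_ker, Polynomial.C_mul_monomial, mul_comm]

theorem minorsContainKernel_of_isWeaklyRegular {n : ℕ} {a : Fin n → A}
    (ha : RingTheory.Sequence.IsWeaklyRegular A (List.ofFn a)) :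
    MinorsContainKernel a Set.univ := by
  have hprefix : ∀ m ≤ n, MinorsContainKernel a {i | (i : ℕ) < m} := by
    intro m
    induction m with
    | zero => exact fun _ => by simpa using minorsContainKernel_empty a
    | succ m ih =>
      intro hm
      have hset : {i : Fin n | (i : ℕ) < m + 1} = insert ⟨m, hm⟩ {i : Fin n | (i : ℕ) < m} := by
        ext i
        simp only [Set.mem_ofPred_eq, Set.mem_insert_iff, Fin.ext_iff]
        omega
      rw [hset]
      exact minorsContainKernel_insert (ih (by omega)) fun _ =>
        mem_of_mul_mem_of_isWeaklyRegular ha hm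
  simpa using hprefix n le_rfl

end ReesAlgebraPresentation

end

open Polynomial

lemma monomial_one_mem_reesAlgebra {A : Type*} [CommRing A] (I : Ideal A) {a : A} (ha : a ∈ I) :
    Polynomial.monomial 1 a ∈ reesAlgebra I :=
  reesAlgebra.monomial_mem.mpr (by simpa using ha)

open ReesAlgebraPresentation in
/-- If `a₀, …, a_r` is a regular sequence in a commutative ring `A` generating the
ideal `I`, then the Rees algebra `A[It]` is isomorphic, via `Xᵢ ↦ aᵢt`, to the quotient of
`A[X₀, …, X_r]` by the ideal generated by the `2×2` minors `aᵢXⱼ − aⱼXᵢ` of the matrix with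
rows `(a₀, …, a_r)` and `(X₀, …, X_r)`. -/
theorem rees_algebra_presentation_of_regular_sequence {A : Type*} [CommRing A] (r : ℕ)
    (a : Fin (r + 1) → A) (hreg : RingTheory.Sequence.IsRegular A (List.ofFn a)) :
    ∃ e : (MvPolynomial (Fin (r + 1)) A ⧸
        Ideal.span {p : MvPolynomial (Fin (r + 1)) A |
          ∃ i j : Fin (r + 1), p =
            MvPolynomial.C (a i) * MvPolynomial.X j - MvPolynomial.C (a j) * MvPolynomial.X i})
        ≃ₐ[A] reesAlgebra (Ideal.span (Set.range a)),
      ∀ i : Fin (r + 1),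
        e (Ideal.Quotient.mk _ (MvPolynomial.X i)) =
          ⟨Polynomial.monomial 1 (a i),
            monomial_one_mem_reesAlgebra _ (Ideal.subset_span ⟨i, rfl⟩)⟩ := by
  set φ : MvPolynomial (Fin (r + 1)) A →ₐ[A] Polynomial A :=
    MvPolynomial.aeval fun i => Polynomial.monomial 1 (a i)
  have hker : Ideal.span {p : MvPolynomial (Fin (r + 1)) A |
      ∃ i j : Fin (r + 1), p =
        MvPolynomial.C (a i) * MvPolynomial.X j - MvPolynomial.C (a j) * MvPolynomial.X i} =
      RingHom.ker φ := by
    rw [(minorsContainKernel_of_isWeaklyRegular hreg.toIsWeaklyRegular).ker_aeval_monomial_one]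
    simp [minorsIdeal]
  refine ⟨(Ideal.quotientEquivAlgOfEq A hker).trans ((Ideal.quotientKerEquivRange φ).trans
    (Subalgebra.equivOfEq _ _ (range_aeval_monomial_one a))), fun i => ?_⟩
  apply Subtype.ext
  simp [φ, Ideal.quotientKerEquivRange]
end

section
/- Let X be a scheme, 𝓙 ⊆ 𝒦_X a fractional ideal (quasi-coherent finite-type 𝒪_X-submodule of 𝒦_X), 𝓕 its ideal sheaf of denominators, 𝓛 an invertible 𝒪_X-module, and f : 𝓛⁻¹ → 𝓕 an injective homomorphism whose image consists of regular sections. Then the composition 𝓙 ⊗ 𝓛⁻¹ → 𝓙 ⊗ 𝓕 → 𝓙·𝓕 ⊆ 𝒪_X identifies 𝓙 with a fractional ideal of the form 𝓙̃ ⊗ 𝓛 = 𝓙̃·𝓛 ⊆ 𝒦_X for some quasi-coherent finite-type ideal 𝓙̃ ⊆ 𝒪_X. -/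
/-- affine model: Let `A` be a commutative ring with total fraction ring
`K = K_A`, `J ⊆ K` a finitely generated `A`-submodule (fractional ideal), `𝓛` an invertible
`A`-submodule of `K` (an invertible module, modelling an invertible sheaf), such that `𝓛⁻¹`
lands in the denominators of `J` (i.e. `𝓛⁻¹·J ⊆ A`). Then `J` is identified with a fractional
ideal of the form `𝓙̃·𝓛` for some finitely generated ideal `𝓙̃ ⊆ A`. -/
theorem fractional_ideal_eq_ideal_mul_invertible {A : Type*} [CommRing A]
    (J : Submodule A (FractionRing A)) (hJ : J.FG)
    (L : (Submodule A (FractionRing A))ˣ)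
    (hden : ∀ x ∈ ((L⁻¹ : (Submodule A (FractionRing A))ˣ) : Submodule A (FractionRing A)),
      ∀ y ∈ J, x * y ∈ (1 : Submodule A (FractionRing A))) :
    ∃ Jtil : Ideal A, Jtil.FG ∧
      J = (Submodule.map (Algebra.linearMap A (FractionRing A)) Jtil) *
        (L : Submodule A (FractionRing A)) := by
  set K := FractionRing A
  set J' : Submodule A K := ((L⁻¹ : (Submodule A K)ˣ) : Submodule A K) * J with hJ'
  have hle : J' ≤ 1 := Submodule.mul_le.2 hden
  have hJ'fg : J'.FG := (Submodule.fg_unit L⁻¹).mul hJ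
  set Jtil : Ideal A := J'.comap (Algebra.linearMap A K) with hJt
  have hmap : Submodule.map (Algebra.linearMap A K) Jtil = J' := by
    apply le_antisymm (Submodule.map_comap_le _ _)
    intro x hx
    obtain ⟨a, ha⟩ := Submodule.mem_one.1 (hle hx)
    exact ⟨a, show Algebra.linearMap A K a ∈ J' by simpa [ha] using hx, ha⟩
  have hinj : Function.Injective (Algebra.linearMap A K) :=
    IsFractionRing.injective A K
  refine ⟨Jtil, Submodule.fg_of_fg_map_injective _ hinj (hmap ▸ hJ'fg), ?_⟩
  rw [hmap, hJ', mul_comm ((L⁻¹ : (Submodule A K)ˣ) : Submodule A K) J, mul_assoc]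
  rw [← Units.val_mul, inv_mul_cancel L, Units.val_one, mul_one]
end
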